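/- arXiv:2408.11389 — 2 statements merged into one kernel-verified Lean document; each statement's English description precedes it below -/
import Mathlib

section
/- Let H be a real Hilbert space of functions on Ω ⊆ ℝ^d with reproducing kernel K, let X = {x₁,…,x_N} ⊆ Ω be distinct points such that the kernel matrix A = [K(x_i,x_j)]_{i,j=1}^N is positive definite, and let γ ∈ ℝ. Define φ_i = Σ_{j=1}^N [A^γ]_{ji} K(·,x_j) and φ̃_i = Σ_{j=1}^N [A^{−1−γ}]_{ji} K(·,x_j), where the real matrix powers are taken via the spectral (continuous functional) calculus of the positive definite matrix A. Then {φ_i} and {φ̃_i} are bases of H_X = span{K(·,x₁),…,K(·,x_N)} and form a dual pair: ⟨φ_i, φ̃_j⟩_H = δ_{ij} for all i,j = 1,…,N. -/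
open scoped RealInnerProductSpace BigOperators
open Matrix

/-- The real power `A^γ` of a positive definite symmetric matrix, obtained by applying
`t ↦ t^γ` to the eigenvalues in a spectral decomposition (continuous functional
calculus). -/
noncomputable def matrixRpow {N : ℕ} {A : Matrix (Fin N) (Fin N) ℝ}
    (hA : A.IsHermitian) (γ : ℝ) : Matrix (Fin N) (Fin N) ℝ :=
  (hA.eigenvectorUnitary : Matrix (Fin N) (Fin N) ℝ) *
    Matrix.diagonal (fun i => hA.eigenvalues i ^ γ) *
    (star hA.eigenvectorUnitary : Matrix (Fin N) (Fin N) ℝ)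

variable {N : ℕ} {A : Matrix (Fin N) (Fin N) ℝ}

lemma matrixRpow_mul (hApd : A.PosDef) (γ δ : ℝ) :
    matrixRpow hApd.isHermitian γ * matrixRpow hApd.isHermitian δ =
    matrixRpow hApd.isHermitian (γ + δ) := by
  unfold matrixRpow
  set hA := hApd.isHermitian
  set U := (hA.eigenvectorUnitary : Matrix (Fin N) (Fin N) ℝ) with hUdef
  have h1 : star U * U = 1 := (Matrix.mem_unitaryGroup_iff').mp hA.eigenvectorUnitary.2
  calc U * diagonal (fun i => hA.eigenvalues i ^ γ) * star U *
        (U * diagonal (fun i => hA.eigenvalues i ^ δ) * star U)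
      = U * (diagonal (fun i => hA.eigenvalues i ^ γ) * ((star U * U) *
          diagonal (fun i => hA.eigenvalues i ^ δ))) * star U := by
        simp only [mul_assoc]
    _ = U * diagonal (fun i => hA.eigenvalues i ^ (γ + δ)) * star U := by
        rw [h1, one_mul, diagonal_mul_diagonal]
        have hd : (fun i => hA.eigenvalues i ^ γ * hA.eigenvalues i ^ δ)
            = fun i => hA.eigenvalues i ^ (γ + δ) :=
          funext fun i => (Real.rpow_add (hApd.eigenvalues_pos i) γ δ).symm
        rw [hd, mul_assoc]

lemma matrixRpow_zero (hApd : A.PosDef) :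
    matrixRpow hApd.isHermitian 0 = 1 := by
  unfold matrixRpow
  simp [Real.rpow_zero, Matrix.diagonal_one,
    (Matrix.mem_unitaryGroup_iff).mp hApd.isHermitian.eigenvectorUnitary.2]

lemma matrixRpow_one (hApd : A.PosDef) :
    matrixRpow hApd.isHermitian 1 = A := by
  unfold matrixRpow
  conv_rhs => rw [hApd.isHermitian.spectral_theorem]
  congr 1
  congr 1
  funext i
  simp [Real.rpow_one]

lemma matrixRpow_transpose (hApd : A.PosDef) (γ : ℝ) :
    (matrixRpow hApd.isHermitian γ)ᵀ = matrixRpow hApd.isHermitian γ := by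
  unfold matrixRpow
  set U := (hApd.isHermitian.eigenvectorUnitary : Matrix (Fin N) (Fin N) ℝ)
  have hsU : star U = Uᵀ := by
    ext i j; simp [Matrix.star_eq_conjTranspose, Matrix.conjTranspose_apply]
  rw [hsU]
  simp [Matrix.transpose_mul, Matrix.diagonal_transpose, mul_assoc]

lemma matrixRpow_span {n : ℕ} {A : Matrix (Fin n) (Fin n) ℝ} (hApd : A.PosDef)
    {H : Type*} [AddCommGroup H] [Module ℝ H]
    (v φ : Fin n → H) (α : ℝ)
    (hφ : ∀ i, φ i = ∑ j, matrixRpow hApd.isHermitian α j i • v j) :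
    Submodule.span ℝ (Set.range φ) = Submodule.span ℝ (Set.range v) := by
  have h1 : matrixRpow hApd.isHermitian α * matrixRpow hApd.isHermitian (-α) = 1 := by
    rw [matrixRpow_mul hApd]
    have h0 : α + -α = 0 := by ring
    rw [h0, matrixRpow_zero hApd]
  have hva : ∀ a, v a = ∑ i, (matrixRpow hApd.isHermitian (-α)) i a • φ i := by
    intro a
    simp_rw [hφ, Finset.smul_sum, smul_smul]
    rw [Finset.sum_comm]
    have hb : ∀ b : Fin n, ∑ i, ((matrixRpow hApd.isHermitian (-α)) i a *
          (matrixRpow hApd.isHermitian α) b i) • v b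
        = ((matrixRpow hApd.isHermitian α * matrixRpow hApd.isHermitian (-α)) b a) • v b := by
      intro b
      rw [← Finset.sum_smul, Matrix.mul_apply]
      congr 1
      exact Finset.sum_congr rfl fun i _ => mul_comm _ _
    simp_rw [hb, h1, Matrix.one_apply]
    simp
  apply le_antisymm
  · rw [Submodule.span_le]
    rintro _ ⟨i, rfl⟩
    rw [hφ]
    exact Submodule.sum_mem _ fun j _ =>
      Submodule.smul_mem _ _ (Submodule.subset_span ⟨j, rfl⟩)
  · rw [Submodule.span_le]
    rintro _ ⟨a, rfl⟩
    rw [hva]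
    exact Submodule.sum_mem _ fun j _ =>
      Submodule.smul_mem _ _ (Submodule.subset_span ⟨j, rfl⟩)


/-- For a positive definite kernel matrix `A` of a reproducing kernel `K` at distinct
sites `x₁,…,x_N` and any `γ ∈ ℝ`, the functions `φ_i = Σ_j [A^γ]_{ji} K(·,x_j)` and
`φ̃_i = Σ_j [A^{-1-γ}]_{ji} K(·,x_j)` are bases of `H_X = span{K(·,x_j)}` forming a
dual pair: `⟪φ_i, φ̃_j⟫ = δ_{ij}`. -/
theorem dual_pair_from_matrix_power
    {d : ℕ} (Ω : Set (EuclideanSpace ℝ (Fin d)))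
    {H : Type*} [NormedAddCommGroup H] [InnerProductSpace ℝ H] [CompleteSpace H]
    (ev : H →ₗ[ℝ] ((EuclideanSpace ℝ (Fin d)) → ℝ))
    (K : EuclideanSpace ℝ (Fin d) → EuclideanSpace ℝ (Fin d) → ℝ)
    (kT : EuclideanSpace ℝ (Fin d) → H)
    (hkT : ∀ x ∈ Ω, ∀ y ∈ Ω, ev (kT x) y = K y x)
    (hrepro : ∀ (f : H), ∀ x ∈ Ω, ⟪f, kT x⟫ = ev f x)
    {N : ℕ} (x : Fin N → EuclideanSpace ℝ (Fin d))
    (hxΩ : ∀ i, x i ∈ Ω) (hdist : Function.Injective x)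
    (A : Matrix (Fin N) (Fin N) ℝ)
    (hA : A = Matrix.of fun i j => K (x i) (x j))
    (hApd : A.PosDef)
    (γ : ℝ)
    (φ φt : Fin N → H)
    (hφ : ∀ i, φ i = ∑ j, (matrixRpow hApd.isHermitian γ) j i • kT (x j))
    (hφt : ∀ i, φt i = ∑ j, (matrixRpow hApd.isHermitian (-1 - γ)) j i • kT (x j))
    (HX : Submodule ℝ H)
    (hHX : HX = Submodule.span ℝ (Set.range fun i => kT (x i))) :
    (LinearIndependent ℝ φ ∧ Submodule.span ℝ (Set.range φ) = HX) ∧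
    (LinearIndependent ℝ φt ∧ Submodule.span ℝ (Set.range φt) = HX) ∧
    (∀ i j, ⟪φ i, φt j⟫ = if i = j then (1 : ℝ) else 0) := by
  have hsymm : ∀ a b, A b a = A a b := by
    intro a b
    have := hApd.isHermitian
    rw [Matrix.IsHermitian] at this
    conv_lhs => rw [← this]
    simp [Matrix.conjTranspose_apply]
  have hvv : ∀ a b : Fin N, ⟪kT (x a), kT (x b)⟫ = A a b := by
    intro a b
    rw [hrepro (kT (x a)) (x b) (hxΩ b), hkT (x a) (hxΩ a) (x b) (hxΩ b), ← hsymm a b, hA]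
    rfl
  have hBB : matrixRpow hApd.isHermitian γ * A * matrixRpow hApd.isHermitian (-1 - γ) = 1 := by
    have h1 : matrixRpow hApd.isHermitian γ * A = matrixRpow hApd.isHermitian (γ + 1) := by
      rw [← matrixRpow_mul hApd γ 1, matrixRpow_one hApd]
    rw [h1, matrixRpow_mul hApd]
    have h2 : γ + 1 + (-1 - γ) = 0 := by ring
    rw [h2, matrixRpow_zero hApd]
  have hdual : ∀ i j, ⟪φ i, φt j⟫ = if i = j then (1 : ℝ) else 0 := by
    intro i j
    rw [hφ, hφt, sum_inner]
    simp_rw [inner_sum, real_inner_smul_left, real_inner_smul_right, hvv]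
    have ht : (matrixRpow hApd.isHermitian γ)ᵀ = matrixRpow hApd.isHermitian γ :=
      matrixRpow_transpose hApd γ
    have hk : ∑ a, ∑ b, matrixRpow hApd.isHermitian γ a i *
          (matrixRpow hApd.isHermitian (-1 - γ) b j * A a b)
        = ((matrixRpow hApd.isHermitian γ)ᵀ * A * matrixRpow hApd.isHermitian (-1 - γ)) i j := by
      rw [Finset.sum_comm]
      simp only [Matrix.mul_apply, Matrix.transpose_apply, Finset.sum_mul]
      exact Finset.sum_congr rfl fun b _ => Finset.sum_congr rfl fun a _ => by ring
    rw [hk, ht, hBB, Matrix.one_apply]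
  have hliφ : LinearIndependent ℝ φ := by
    rw [Fintype.linearIndependent_iff]
    intro g hg j
    have h0 : ⟪∑ i, g i • φ i, φt j⟫ = 0 := by rw [hg, inner_zero_left]
    rw [sum_inner] at h0
    simp_rw [real_inner_smul_left, hdual] at h0
    simpa using h0
  have hliφt : LinearIndependent ℝ φt := by
    rw [Fintype.linearIndependent_iff]
    intro g hg i
    have h0 : ⟪φ i, ∑ j, g j • φt j⟫ = 0 := by rw [hg, inner_zero_right]
    rw [inner_sum] at h0
    simp_rw [real_inner_smul_right, hdual] at h0
    simpa using h0
  refine ⟨⟨hliφ, ?_⟩, ⟨hliφt, ?_⟩, hdual⟩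
  · rw [hHX]; exact matrixRpow_span hApd _ φ γ hφ
  · rw [hHX]; exact matrixRpow_span hApd _ φt (-1 - γ) hφt
end

section
/- Let τ = {x₁,…,x_n} ⊂ ℝ^d be a finite set of points, q ∈ ℕ, and let β ∈ ℝ^n with ‖β‖₂ ≤ 1 be such that the signed measure σ = Σ_{i=1}^n β_i δ_{x_i} has vanishing moments of order q+1, i.e., Σ_{i=1}^n β_i p(x_i) = 0 for every polynomial p on ℝ^d of total degree at most q. Then for every open convex set O ⊂ ℝ^d containing τ and every f ∈ C^{q+1}(O), there holds |Σ_{i=1}^n β_i f(x_i)| ≤ √n · (d/2)^{q+1} · diam(τ)^{q+1} / (q+1)! · ‖f‖_{C^{q+1}(O)}, where diam(τ) = max_{x,y ∈ τ} ‖x − y‖_∞ and ‖f‖_{C^{q+1}(O)} = max_{|α| ≤ q+1} sup_{x ∈ O} |∂^α f(x)| over multi-indices α. -/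
/-!
Pick a centre `y` in the convex hull of `τ`: the nearest point of the hull to the centre of the
bounding box of `τ` is at least as close to every `xᵢ` as that centre, hence at distance at most
`d · diam / 2`, and the segments `[y, xᵢ]` stay in `O`. The Taylor polynomial of `f` of degree `q`
at `y` is a polynomial of total degree `≤ q` in the coordinates, so `σ` annihilates it, and
`Σ βᵢ f(xᵢ)` only sees the Lagrange remainders, each bounded by
`M (d · diam / 2)^(q+1) / (q+1)!`. Cauchy–Schwarz turns `‖β‖₂ ≤ 1` into the factor `√n`.
-/

open Set MvPolynomial
open scoped Pointwise Nat

section Taylor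

variable {E F : Type*} [NormedAddCommGroup E] [NormedSpace ℝ E]
  [NormedAddCommGroup F] [NormedSpace ℝ F]

noncomputable def mvTaylorWithinEval (f : E → F) (n : ℕ) (s : Set E) (y z : E) : F :=
  ∑ m ∈ Finset.range (n + 1), (m ! : ℝ)⁻¹ • iteratedFDerivWithin ℝ m f s y (fun _ => z - y)

theorem iteratedDerivWithin_Icc_comp_add_smul {f : E → F} {s : Set E} {n : WithTop ℕ∞}
    (hs : IsOpen s) (hf : ContDiffOn ℝ n f s) {y v : E}
    (hmaps : MapsTo (fun t : ℝ => y + t • v) (Icc 0 1) s) {m : ℕ} (hm : m ≤ n)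
    {t : ℝ} (ht : t ∈ Icc (0 : ℝ) 1) :
    iteratedDerivWithin m (fun t => f (y + t • v)) (Icc 0 1) t =
      iteratedFDerivWithin ℝ m f s (y + t • v) (fun _ => v) := by
  set L : ℝ →L[ℝ] E := ContinuousLinearMap.toSpanSingleton ℝ v
  set s' : Set E := (y + ·) ⁻¹' s
  have hs' : IsOpen s' := hs.preimage (by fun_prop)
  have hU : IsOpen (L ⁻¹' s') := hs'.preimage L.continuous
  have hIccU : Icc (0 : ℝ) 1 ⊆ L ⁻¹' s' := fun t ht => by simpa [L, s'] using hmaps ht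
  have hf' : ContDiffOn ℝ n (fun z => f (y + z)) s' :=
    hf.comp (contDiff_const.add contDiff_id).contDiffOn (fun z hz => hz)
  have hg : ContDiffOn ℝ m ((fun z => f (y + z)) ∘ L) (L ⁻¹' s') :=
    (hf'.comp L.contDiff.contDiffOn (fun z hz => hz)).of_le hm
  have hys' : y +ᵥ s' = s := by
    simp only [s', ← vadd_eq_add, preimage_vadd, vadd_neg_vadd]
  change iteratedFDerivWithin ℝ m ((fun z => f (y + z)) ∘ L) (Icc 0 1) t (fun _ => 1) = _
  rw [iteratedFDerivWithin_subset hIccU (uniqueDiffOn_Icc zero_lt_one) hU.uniqueDiffOn hg ht,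
    L.iteratedFDerivWithin_comp_right hf' hs'.uniqueDiffOn hU.uniqueDiffOn (hIccU ht) hm]
  simp [L, iteratedFDerivWithin_comp_add_left, hys']

theorem taylorWithinEval_Icc_comp_add_smul {f : E → F} {s : Set E} {n : ℕ}
    (hs : IsOpen s) (hf : ContDiffOn ℝ n f s) {y v : E}
    (hmaps : MapsTo (fun t : ℝ => y + t • v) (Icc 0 1) s) :
    taylorWithinEval (fun t => f (y + t • v)) n (Icc 0 1) 0 1 =
      mvTaylorWithinEval f n s y (y + v) := by
  rw [taylor_within_apply, mvTaylorWithinEval]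
  refine Finset.sum_congr rfl fun m hm => ?_
  rw [iteratedDerivWithin_Icc_comp_add_smul hs hf hmaps
    (by exact_mod_cast Finset.mem_range_succ_iff.mp hm) (left_mem_Icc.mpr zero_le_one)]
  simp

theorem abs_sub_mvTaylorWithinEval_le {f : E → ℝ} {s : Set E} {n : ℕ} {y z : E} {C : ℝ}
    (hs : IsOpen s) (hf : ContDiffOn ℝ (n + 1) f s) (hseg : segment ℝ y z ⊆ s)
    (hC : ∀ w ∈ segment ℝ y z, ‖iteratedFDerivWithin ℝ (n + 1) f s w‖ ≤ C) :
    |f z - mvTaylorWithinEval f n s y z| ≤ C * ‖z - y‖ ^ (n + 1) / (n + 1)! := by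
  set v := z - y
  have hmaps : MapsTo (fun t : ℝ => y + t • v) (Icc 0 1) (segment ℝ y z) := fun t ht => by
    rw [segment_eq_image']; exact mem_image_of_mem _ ht
  have hg : ContDiffOn ℝ (n + 1) (fun t : ℝ => f (y + t • v)) (Icc 0 1) :=
    hf.comp (by fun_prop : ContDiff ℝ (n + 1) fun t : ℝ => y + t • v).contDiffOn
      (hmaps.mono_right hseg)
  obtain ⟨ξ, hξ, hrem⟩ := taylor_mean_remainder_lagrange (f := fun t : ℝ => f (y + t • v))
    (n := n) zero_ne_one (by simpa [uIcc_of_le] using hg.of_le (by norm_cast; omega))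
    (by simpa [uIcc_of_le, uIoo_of_le] using
      (hg.differentiableOn_iteratedDerivWithin (by norm_cast; omega)
        (uniqueDiffOn_Icc zero_lt_one)).mono Ioo_subset_Icc_self)
  simp only [uIcc_of_le zero_le_one, uIoo_of_le zero_le_one] at hξ hrem
  have hξ' : ξ ∈ Icc (0 : ℝ) 1 := Ioo_subset_Icc_self hξ
  rw [taylorWithinEval_Icc_comp_add_smul hs (hf.of_le (by norm_cast; omega))
    (hmaps.mono_right hseg), iteratedDerivWithin_Icc_comp_add_smul hs hf (hmaps.mono_right hseg)
    le_rfl hξ'] at hrem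
  have hDv : |iteratedFDerivWithin ℝ (n + 1) f s (y + ξ • v) (fun _ => v)| ≤ C * ‖v‖ ^ (n + 1) :=
    calc |iteratedFDerivWithin ℝ (n + 1) f s (y + ξ • v) (fun _ => v)|
        ≤ ‖iteratedFDerivWithin ℝ (n + 1) f s (y + ξ • v)‖ * ∏ _ : Fin (n + 1), ‖v‖ :=
          (Real.norm_eq_abs _).symm.trans_le (ContinuousMultilinearMap.le_opNorm _ _)
      _ ≤ C * ‖v‖ ^ (n + 1) := by
          rw [Finset.prod_const, Finset.card_fin]
          exact mul_le_mul_of_nonneg_right (hC _ (hmaps hξ')) (by positivity)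
  rw [one_smul, show y + v = z from add_sub_cancel y z, sub_zero, one_pow, mul_one] at hrem
  rw [hrem, abs_div, Nat.abs_cast]
  gcongr

end Taylor

theorem MultilinearMap.exists_totalDegree_le_eval_equivFun_eq {R ι E : Type*} [CommRing R]
    [Fintype ι] [AddCommGroup E] [Module R E] (b : Module.Basis ι R E) {m : ℕ}
    (W : MultilinearMap R (fun _ : Fin m => E) R) (y : E) :
    ∃ p : MvPolynomial ι R, p.totalDegree ≤ m ∧
      ∀ z, eval (b.equivFun z) p = W (fun _ => z - y) := by
  classical
  refine ⟨∑ r : Fin m → ι, C (W fun j => b (r j)) * ∏ j, (X (r j) - C (b.equivFun y (r j))),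
    ?_, fun z => ?_⟩
  · refine (totalDegree_finsetSum _ _).trans (Finset.sup_le fun r _ => ?_)
    refine (totalDegree_mul _ _).trans ?_
    rw [totalDegree_C, zero_add]
    refine (totalDegree_finsetProd _ _).trans ?_
    calc ∑ j, (X (r j) - C (b.equivFun y (r j)) : MvPolynomial ι R).totalDegree
        ≤ ∑ _j : Fin m, 1 := Finset.sum_le_sum fun j _ =>
          (totalDegree_sub _ _).trans (max_le ((totalDegree_monomial_le _ _).trans (by simp))
            (by simp))
      _ = m := by simp
  · conv_rhs => rw [← b.sum_equivFun (z - y), W.map_sum]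
    rw [_root_.map_sum]
    refine Finset.sum_congr rfl fun r _ => ?_
    simp [W.map_smul_univ, mul_comm]

theorem exists_totalDegree_le_eval_equivFun_eq_mvTaylorWithinEval {ι E : Type*} [Fintype ι]
    [NormedAddCommGroup E] [NormedSpace ℝ E] (b : Module.Basis ι ℝ E) (f : E → ℝ) (n : ℕ)
    (s : Set E) (y : E) :
    ∃ p : MvPolynomial ι ℝ, p.totalDegree ≤ n ∧
      ∀ z, eval (b.equivFun z) p = mvTaylorWithinEval f n s y z := by
  choose p hpdeg hpeval using fun m =>
    (iteratedFDerivWithin ℝ m f s y).toMultilinearMap.exists_totalDegree_le_eval_equivFun_eq b y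
  refine ⟨∑ m ∈ Finset.range (n + 1), (m ! : ℝ)⁻¹ • p m, ?_, fun z => ?_⟩
  · refine (totalDegree_finsetSum _ _).trans (Finset.sup_le fun m hm => ?_)
    exact (totalDegree_smul_le _ _).trans ((hpdeg m).trans (Finset.mem_range_succ_iff.mp hm))
  · simp only [mvTaylorWithinEval, _root_.map_sum, smul_eval, hpeval, smul_eq_mul]
    rfl

theorem exists_forall_abs_sub_le_half {ι : Type*} [Finite ι] [Nonempty ι] {a : ι → ℝ} {r : ℝ}
    (h : ∀ i j, |a i - a j| ≤ r) : ∃ c, ∀ i, |a i - c| ≤ r / 2 := by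
  obtain ⟨i₀, hi₀⟩ := Finite.exists_min a
  obtain ⟨i₁, hi₁⟩ := Finite.exists_max a
  have hspread := (le_abs_self _).trans (h i₁ i₀)
  exact ⟨(a i₀ + a i₁) / 2, fun i => abs_le.2 ⟨by linarith [hi₀ i], by linarith [hi₁ i]⟩⟩

theorem EuclideanSpace.norm_le_card_mul {ι : Type*} [Fintype ι] {v : EuclideanSpace ℝ ι} {r : ℝ}
    (h : ∀ k, |v k| ≤ r) : ‖v‖ ≤ Fintype.card ι * r := by
  classical
  have hv := (EuclideanSpace.basisFun ι ℝ).sum_repr v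
  simp only [EuclideanSpace.basisFun_apply, EuclideanSpace.basisFun_repr] at hv
  calc ‖v‖ = ‖∑ k, v k • EuclideanSpace.single k (1 : ℝ)‖ := by rw [hv]
    _ ≤ ∑ k, ‖v k • EuclideanSpace.single k (1 : ℝ)‖ := norm_sum_le _ _
    _ ≤ ∑ _k : ι, r := Finset.sum_le_sum fun k _ => by simpa [norm_smul] using h k
    _ = Fintype.card ι * r := by simp

theorem exists_mem_forall_norm_sub_le_norm_sub {G : Type*} [NormedAddCommGroup G]
    [InnerProductSpace ℝ G] {K : Set G} (hne : K.Nonempty) (hK : IsComplete K)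
    (hconv : Convex ℝ K) (c : G) : ∃ y ∈ K, ∀ z ∈ K, ‖z - y‖ ≤ ‖z - c‖ := by
  obtain ⟨y, hyK, hymin⟩ := exists_norm_eq_iInf_of_complete_convex hne hK hconv c
  refine ⟨y, hyK, fun z hz => ?_⟩
  have hobtuse : inner ℝ (c - y) (z - y) ≤ 0 :=
    (norm_eq_iInf_iff_real_inner_le_zero hconv hyK).mp hymin z hz
  have hexpand : ‖z - c‖ ^ 2 = ‖z - y‖ ^ 2 - 2 * inner ℝ (z - y) (c - y) + ‖c - y‖ ^ 2 := by
    rw [show z - c = (z - y) - (c - y) by abel, norm_sub_sq_real]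
  rw [real_inner_comm] at hexpand
  exact (sq_le_sq₀ (norm_nonneg _) (norm_nonneg _)).mp (by nlinarith [sq_nonneg ‖c - y‖])

theorem abs_sum_mul_le_sqrt_card_mul {ι : Type*} [Fintype ι] {β r : ι → ℝ} {C : ℝ}
    (hβ : ∑ i, β i ^ 2 ≤ 1) (hr : ∀ i, |r i| ≤ C) :
    |∑ i, β i * r i| ≤ √(Fintype.card ι) * C := by
  rcases isEmpty_or_nonempty ι with hι | ⟨⟨i₀⟩⟩
  · simp
  have hC : 0 ≤ C := (abs_nonneg _).trans (hr i₀)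
  have hcs := Finset.sum_mul_sq_le_sq_mul_sq Finset.univ β r
  have hr2 : ∑ i, r i ^ 2 ≤ Fintype.card ι * C ^ 2 := by
    simpa using Finset.sum_le_sum fun i (_ : i ∈ Finset.univ) =>
      (sq_le_sq₀ (abs_nonneg _) hC).2 (hr i) |>.trans_eq' (sq_abs _).symm
  calc |∑ i, β i * r i| ≤ √(Fintype.card ι * C ^ 2) := Real.abs_le_sqrt <| hcs.trans <| by
        nlinarith [Finset.sum_nonneg fun i (_ : i ∈ Finset.univ) => sq_nonneg (r i)]
    _ = √(Fintype.card ι) * C := by rw [Real.sqrt_mul (by positivity), Real.sqrt_sq hC]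

theorem samplet_vanishing_moment_estimate_general
    {d n : ℕ} (hn : 0 < n) (q : ℕ)
    (x : Fin n → EuclideanSpace ℝ (Fin d))
    (β : Fin n → ℝ) (hβ : ∑ i, β i ^ 2 ≤ 1)
    (hvanish : ∀ p : MvPolynomial (Fin d) ℝ, p.totalDegree ≤ q →
      ∑ i, β i * MvPolynomial.eval (fun k => x i k) p = 0)
    (O : Set (EuclideanSpace ℝ (Fin d))) (hO : IsOpen O) (hOconv : Convex ℝ O)
    (hxO : ∀ i, x i ∈ O)
    (f : EuclideanSpace ℝ (Fin d) → ℝ)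
    (hf : ContDiffOn ℝ (q + 1) f O)
    -- `diam` is the `ℓ^∞`-diameter of `τ = {x₁,…,x_n}`
    (diam : ℝ)
    (hdiam_ub : ∀ i j : Fin n, ∀ k : Fin d, |x i k - x j k| ≤ diam)
    -- `M` bounds all derivatives of `f` up to order `q+1` on `O`
    (M : ℝ)
    (hM : ∀ m : ℕ, m ≤ q + 1 → ∀ y ∈ O, ‖iteratedFDerivWithin ℝ m f O y‖ ≤ M) :
    |∑ i, β i * f (x i)| ≤
      Real.sqrt n * ((d : ℝ) / 2) ^ (q + 1) * diam ^ (q + 1) /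
        (Nat.factorial (q + 1)) * M := by
  have : Nonempty (Fin n) := ⟨⟨0, hn⟩⟩
  choose c hc using fun k => exists_forall_abs_sub_le_half fun i j => hdiam_ub i j k
  obtain ⟨y, hyK, hy⟩ := exists_mem_forall_norm_sub_le_norm_sub
    ⟨x ⟨0, hn⟩, subset_convexHull ℝ _ (mem_range_self _)⟩
    ((finite_range x).isCompact_convexHull ℝ).isComplete (convex_convexHull ℝ _)
    (WithLp.toLp 2 c)
  have hyO : y ∈ O := convexHull_min (range_subset_iff.2 hxO) hOconv hyK
  have hdist (i : Fin n) : ‖x i - y‖ ≤ d * (diam / 2) :=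
    (hy _ (subset_convexHull ℝ _ (mem_range_self i))).trans
      (by simpa using EuclideanSpace.norm_le_card_mul fun k => hc k i)
  obtain ⟨p, hpdeg, hpeval⟩ :=
    exists_totalDegree_le_eval_equivFun_eq_mvTaylorWithinEval (PiLp.basisFun 2 ℝ (Fin d)) f q O y
  have hmoment : ∑ i, β i * mvTaylorWithinEval f q O y (x i) = 0 := by
    simp only [← hpeval]
    exact hvanish p hpdeg
  have hM0 : 0 ≤ M := (norm_nonneg _).trans (hM 0 (Nat.zero_le _) y hyO)
  have hremainder (i : Fin n) : |f (x i) - mvTaylorWithinEval f q O y (x i)| ≤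
      M * (d * (diam / 2)) ^ (q + 1) / (q + 1)! := by
    have hseg := hOconv.segment_subset hyO (hxO i)
    refine (abs_sub_mvTaylorWithinEval_le hO hf hseg fun w hw => hM _ le_rfl w (hseg hw)).trans ?_
    gcongr
    exact hdist i
  calc |∑ i, β i * f (x i)|
      = |∑ i, β i * (f (x i) - mvTaylorWithinEval f q O y (x i))| := by
        simp only [mul_sub, Finset.sum_sub_distrib, hmoment, sub_zero]
    _ ≤ √n * (M * (d * (diam / 2)) ^ (q + 1) / (q + 1)!) := by
        simpa using abs_sum_mul_le_sqrt_card_mul hβ hremainder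
    _ = _ := by ring

/-- **Vanishing moment estimate for samplets.**  Let `τ = {x₁,…,x_n} ⊂ ℝ^d`, `q ∈ ℕ`,
and let `β ∈ ℝ^n` with `‖β‖₂ ≤ 1` be such that the signed measure
`σ = Σ_i β_i δ_{x_i}` has vanishing moments of order `q+1`, i.e. `Σ_i β_i p(x_i) = 0`
for every polynomial `p` of total degree at most `q`.  Then for every open convex set
`O` containing `τ` and every `f ∈ C^{q+1}(O)` (with all derivatives of order at most
`q+1` bounded by `M` on `O`, `M` playing the role of `‖f‖_{C^{q+1}(O)}`),
`|Σ_i β_i f(x_i)| ≤ √n (d/2)^{q+1} diam(τ)^{q+1} / (q+1)! · M`,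
where `diam(τ) = max_{i,j} ‖x_i - x_j‖_∞`. -/
theorem samplet_vanishing_moment_estimate
    {d n : ℕ} (hd : 0 < d) (hn : 0 < n) (q : ℕ)
    (x : Fin n → EuclideanSpace ℝ (Fin d))
    (β : Fin n → ℝ) (hβ : ∑ i, β i ^ 2 ≤ 1)
    (hvanish : ∀ p : MvPolynomial (Fin d) ℝ, p.totalDegree ≤ q →
      ∑ i, β i * MvPolynomial.eval (fun k => x i k) p = 0)
    (O : Set (EuclideanSpace ℝ (Fin d))) (hO : IsOpen O) (hOconv : Convex ℝ O)
    (hxO : ∀ i, x i ∈ O)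
    (f : EuclideanSpace ℝ (Fin d) → ℝ)
    (hf : ContDiffOn ℝ (q + 1) f O)
    -- `diam` is the `ℓ^∞`-diameter of `τ = {x₁,…,x_n}`
    (diam : ℝ)
    (hdiam_ub : ∀ i j : Fin n, ∀ k : Fin d, |x i k - x j k| ≤ diam)
    (hdiam_mem : ∃ i j : Fin n, ∃ k : Fin d, |x i k - x j k| = diam)
    -- `M` bounds all derivatives of `f` up to order `q+1` on `O`
    (M : ℝ)
    (hM : ∀ m : ℕ, m ≤ q + 1 → ∀ y ∈ O, ‖iteratedFDerivWithin ℝ m f O y‖ ≤ M) :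
    |∑ i, β i * f (x i)| ≤
      Real.sqrt n * ((d : ℝ) / 2) ^ (q + 1) * diam ^ (q + 1) /
        (Nat.factorial (q + 1)) * M :=
  samplet_vanishing_moment_estimate_general hn q x β hβ hvanish O hO hOconv hxO f hf diam hdiam_ub M
    hM
end
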